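/- Let D = Dⁿ ∪ Dˣ be a database instance, Q a monotone Boolean query, ℳ the associated diagnosis problem, and t ∈ Dⁿ. Then: (a) ρ(t) = 0 if and only if MCD(ℳ,t) = ∅; (b) otherwise ρ(t) = 1/|s| for any s ∈ MCD(ℳ,t). (Proposition 10) -/

import Mathlib

open scoped Classical

variable {α : Type*} [DecidableEq α]

/-- A monotone Boolean query on database instances (finite sets of tuples). -/
def MonotoneQuery (Q : Finset α → Prop) : Prop :=
  ∀ ⦃X Y : Finset α⦄, X ⊆ Y → Q X → Q Y

/-- `Γ` is a contingency set for tuple `t` wrt query `Q`, instance `D`,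
endogenous part `Dn`. -/
def IsContingency (D Dn : Finset α) (Q : Finset α → Prop) (t : α) (Γ : Finset α) : Prop :=
  Γ ⊆ Dn ∧ t ∉ Γ ∧ Q (D \ Γ) ∧ ¬ Q (D \ (Γ ∪ {t}))

/-- `t` is an actual cause for `Q`. -/
def IsActualCause (D Dn : Finset α) (Q : Finset α → Prop) (t : α) : Prop :=
  t ∈ Dn ∧ ∃ Γ : Finset α, IsContingency D Dn Q t Γ

/-- Minimum cardinality of a contingency set for `t`. -/
noncomputable def minContingency (D Dn : Finset α) (Q : Finset α → Prop) (t : α) : ℕ :=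
  sInf {m : ℕ | ∃ Γ : Finset α, IsContingency D Dn Q t Γ ∧ Γ.card = m}

/-- Responsibility of `t`: `1/(1+m)` with `m` the minimum size of a contingency set,
and `0` if `t` is not an actual cause. -/
noncomputable def resp (D Dn : Finset α) (Q : Finset α → Prop) (t : α) : ℚ :=
  if IsActualCause D Dn Q t then 1 / (1 + (minContingency D Dn Q t : ℚ)) else 0

/-- `t` is a most responsible actual cause. -/
def IsMostResponsibleCause (D Dn : Finset α) (Q : Finset α → Prop) (t : α) : Prop :=
  IsActualCause D Dn Q t ∧ ∀ t' : α, ¬ resp D Dn Q t < resp D Dn Q t'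

/-- `D'` is an S-repair of `D` wrt the denial constraint `¬ Q`. -/
def IsSRepair (D : Finset α) (Q : Finset α → Prop) (D' : Finset α) : Prop :=
  D' ⊆ D ∧ ¬ Q D' ∧ ∀ D'' : Finset α, D'' ⊆ D → ¬ Q D'' → D' ⊆ D'' → D'' = D'

/-- `D'` is a C-repair of `D` wrt the denial constraint `¬ Q`. -/
def IsCRepair (D : Finset α) (Q : Finset α → Prop) (D' : Finset α) : Prop :=
  D' ⊆ D ∧ ¬ Q D' ∧ ∀ D'' : Finset α, D'' ⊆ D → ¬ Q D'' → D''.card ≤ D'.card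

/-- `Γ ∈ CT(t)`: `Γ` is an S-minimal contingency set for `t`. -/
def InCT (D Dn : Finset α) (Q : Finset α → Prop) (t : α) (Γ : Finset α) : Prop :=
  IsContingency D Dn Q t Γ ∧ ∀ Γ'' : Finset α, Γ'' ⊂ Γ → Q (D \ (Γ'' ∪ {t}))

/-- `𝔖(D)`: S-minimal subsets of `D` satisfying `Q`. -/
def Sfam (D : Finset α) (Q : Finset α → Prop) : Set (Finset α) :=
  {s | s ⊆ D ∧ Q s ∧ ∀ s' : Finset α, s' ⊂ s → ¬ Q s'}

/-- Subsets of `Dn` contained in some `s' ∈ 𝔖(D)` whose remainder is exogenous. -/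
def SnPre (D Dn Dx : Finset α) (Q : Finset α → Prop) : Set (Finset α) :=
  {s | s ⊆ Dn ∧ ∃ s' ∈ Sfam D Q, s ⊆ s' ∧ s' \ s ⊆ Dx}

/-- `𝔖ⁿ(D)`: the inclusion-minimal elements of `SnPre`. -/
def SnFam (D Dn Dx : Finset α) (Q : Finset α → Prop) : Set (Finset α) :=
  {s ∈ SnPre D Dn Dx Q | ∀ s' ∈ SnPre D Dn Dx Q, s' ⊆ s → s' = s}

/-- `H` is a hitting set for `𝔖ⁿ(D)`. -/
def IsHittingSet (D Dn Dx : Finset α) (Q : Finset α → Prop) (H : Finset α) : Prop :=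
  H ⊆ Dn ∧ ∀ s ∈ SnFam D Dn Dx Q, (H ∩ s).Nonempty

/-- `H` is an S-minimal hitting set for `𝔖ⁿ(D)`. -/
def IsSMinimalHittingSet (D Dn Dx : Finset α) (Q : Finset α → Prop) (H : Finset α) : Prop :=
  IsHittingSet D Dn Dx Q H ∧ ∀ H' : Finset α, H' ⊂ H → ¬ IsHittingSet D Dn Dx Q H'

/-- `H` is a minimum-cardinality hitting set for `𝔖ⁿ(D)`. -/
def IsMinimumHittingSet (D Dn Dx : Finset α) (Q : Finset α → Prop) (H : Finset α) : Prop :=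
  IsHittingSet D Dn Dx Q H ∧ ∀ H' : Finset α, IsHittingSet D Dn Dx Q H' → H.card ≤ H'.card

/-- `Δ` is a diagnosis for the diagnosis problem associated with `Q`. -/
def IsDiagnosis (D Dn : Finset α) (Q : Finset α → Prop) (Δ : Finset α) : Prop :=
  Δ ⊆ Dn ∧ ¬ Q (D \ Δ)

/-- `Δ ∈ 𝒟(ℳ,t)`: `Δ` is an inclusion-minimal diagnosis containing `t`. -/
def IsMinimalDiagnosisWith (D Dn : Finset α) (Q : Finset α → Prop) (t : α)
    (Δ : Finset α) : Prop :=
  IsDiagnosis D Dn Q Δ ∧ t ∈ Δ ∧ ∀ Δ' : Finset α, Δ' ⊂ Δ → ¬ IsDiagnosis D Dn Q Δ'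

/-- `Δ ∈ MCD(ℳ,t)`: `Δ` is an element of `𝒟(ℳ,t)` of minimum cardinality. -/
def IsMCDWith (D Dn : Finset α) (Q : Finset α → Prop) (t : α) (Δ : Finset α) : Prop :=
  IsMinimalDiagnosisWith D Dn Q t Δ ∧
    ∀ Δ' : Finset α, IsMinimalDiagnosisWith D Dn Q t Δ' → Δ.card ≤ Δ'.card

/-!
Removing `t` from an inclusion-minimal diagnosis `Δ ∋ t` leaves a contingency set for `t`, by
minimality of `Δ`. Conversely, if `Γ` is a contingency set for `t`, then `Γ ∪ {t}` is a diagnosis,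
and an inclusion-minimal diagnosis `Δ ⊆ Γ ∪ {t}` must contain `t`: otherwise `Δ ⊆ Γ`, and
monotonicity of `Q` would turn `Q (D \ Γ)` into `Q (D \ Δ)`. Hence the minimum size `m` of a
contingency set is `|Δ| - 1` for every `Δ ∈ MCD(ℳ,t)`, and `ρ(t) = 1 / (1 + m) = 1 / |Δ|`.
-/

section

variable {D Dn : Finset α} {Q : Finset α → Prop} {t : α}

lemma IsMinimalDiagnosisWith.isContingency_erase {Δ : Finset α}
    (h : IsMinimalDiagnosisWith D Dn Q t Δ) : IsContingency D Dn Q t (Δ.erase t) := by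
  obtain ⟨⟨hΔDn, hnQ⟩, htΔ, hmin⟩ := h
  have hsub : Δ.erase t ⊆ Dn := (Finset.erase_subset t Δ).trans hΔDn
  refine ⟨hsub, Finset.notMem_erase t Δ, ?_, ?_⟩
  · by_contra hQ
    exact hmin _ (Finset.erase_ssubset htΔ) ⟨hsub, hQ⟩
  · rwa [Finset.union_singleton, Finset.insert_erase htΔ]

lemma IsMinimalDiagnosisWith.isActualCause {Δ : Finset α}
    (h : IsMinimalDiagnosisWith D Dn Q t Δ) : IsActualCause D Dn Q t :=
  ⟨h.1.1 h.2.1, _, h.isContingency_erase⟩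

lemma IsContingency.exists_isMinimalDiagnosisWith (hmono : MonotoneQuery Q) (ht : t ∈ Dn)
    {Γ : Finset α} (hΓ : IsContingency D Dn Q t Γ) :
    ∃ Δ, IsMinimalDiagnosisWith D Dn Q t Δ ∧ Δ.card ≤ Γ.card + 1 := by
  obtain ⟨hΓDn, -, hQ, hnQ⟩ := hΓ
  rw [Finset.union_singleton] at hnQ
  have hdiag : IsDiagnosis D Dn Q (insert t Γ) := ⟨Finset.insert_subset ht hΓDn, hnQ⟩
  obtain ⟨Δ, hΔsub, hΔmin⟩ := exists_minimal_le_of_wellFoundedLT _ _ hdiag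
  have htΔ : t ∈ Δ := by
    by_contra htΔ
    have hΔΓ : Δ ⊆ Γ := (Finset.subset_insert_iff_of_notMem htΔ).mp hΔsub
    exact hΔmin.prop.2 (hmono (Finset.sdiff_subset_sdiff subset_rfl hΔΓ) hQ)
  exact ⟨Δ, ⟨hΔmin.prop, htΔ, fun Δ' hΔ' ↦ hΔmin.not_prop_of_lt hΔ'⟩,
    (Finset.card_le_card hΔsub).trans (Finset.card_insert_le t Γ)⟩

lemma exists_isMCDWith_of_isMinimalDiagnosisWith {Δ : Finset α}
    (h : IsMinimalDiagnosisWith D Dn Q t Δ) : ∃ Δ₀, IsMCDWith D Dn Q t Δ₀ := by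
  obtain ⟨Δ₀, hΔ₀, hmin⟩ :=
    (InvImage.wf Finset.card wellFounded_lt).has_min {Δ | IsMinimalDiagnosisWith D Dn Q t Δ} ⟨Δ, h⟩
  exact ⟨Δ₀, hΔ₀, fun Δ' hΔ' ↦ not_lt.mp (hmin Δ' hΔ')⟩

lemma exists_isMCDWith_iff (hmono : MonotoneQuery Q) (ht : t ∈ Dn) :
    (∃ Δ, IsMCDWith D Dn Q t Δ) ↔ IsActualCause D Dn Q t := by
  refine ⟨fun ⟨_, hΔ⟩ ↦ hΔ.1.isActualCause, fun ⟨_, _, hΓ⟩ ↦ ?_⟩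
  obtain ⟨Δ, hΔ, -⟩ := hΓ.exists_isMinimalDiagnosisWith hmono ht
  exact exists_isMCDWith_of_isMinimalDiagnosisWith hΔ

lemma minContingency_le {Γ : Finset α} (hΓ : IsContingency D Dn Q t Γ) :
    minContingency D Dn Q t ≤ Γ.card :=
  Nat.sInf_le ⟨Γ, hΓ, rfl⟩

lemma exists_isContingency_card_eq_minContingency (h : IsActualCause D Dn Q t) :
    ∃ Γ, IsContingency D Dn Q t Γ ∧ Γ.card = minContingency D Dn Q t :=
  let ⟨_, Γ, hΓ⟩ := h
  Nat.sInf_mem (s := {m | ∃ Γ, IsContingency D Dn Q t Γ ∧ Γ.card = m}) ⟨Γ.card, Γ, hΓ, rfl⟩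

lemma IsMCDWith.minContingency_add_one (hmono : MonotoneQuery Q) (ht : t ∈ Dn) {Δ : Finset α}
    (hΔ : IsMCDWith D Dn Q t Δ) : minContingency D Dn Q t + 1 = Δ.card := by
  have hle : minContingency D Dn Q t + 1 ≤ Δ.card := by
    rw [← Finset.card_erase_add_one hΔ.1.2.1]
    exact Nat.add_le_add_right (minContingency_le hΔ.1.isContingency_erase) 1
  obtain ⟨Γ₀, hΓ₀, hcard⟩ := exists_isContingency_card_eq_minContingency hΔ.1.isActualCause
  obtain ⟨Δ', hΔ', hΔ'card⟩ := hΓ₀.exists_isMinimalDiagnosisWith hmono ht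
  have := hΔ.2 Δ' hΔ'
  omega

lemma resp_eq_zero_iff : resp D Dn Q t = 0 ↔ ¬ IsActualCause D Dn Q t := by
  unfold resp
  split_ifs with h
  · simp only [one_div, inv_eq_zero, h, not_true_eq_false, iff_false]
    positivity
  · simp only [h, not_false_eq_true]

lemma IsMCDWith.resp_eq (hmono : MonotoneQuery Q) (ht : t ∈ Dn) {Δ : Finset α}
    (hΔ : IsMCDWith D Dn Q t Δ) : resp D Dn Q t = 1 / (Δ.card : ℚ) := by
  rw [resp, if_pos hΔ.1.isActualCause, ← hΔ.minContingency_add_one hmono ht]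
  push_cast
  ring

end

theorem resp_via_mcd_general (D Dn : Finset α) (Q : Finset α → Prop)
    (hmono : MonotoneQuery Q)
    (t : α) (ht : t ∈ Dn) :
    (resp D Dn Q t = 0 ↔ ¬ ∃ Δ : Finset α, IsMCDWith D Dn Q t Δ) ∧
    (∀ Δ : Finset α, IsMCDWith D Dn Q t Δ → resp D Dn Q t = 1 / (Δ.card : ℚ)) := by
  rw [resp_eq_zero_iff, exists_isMCDWith_iff hmono ht]
  exact ⟨Iff.rfl, fun Δ hΔ ↦ hΔ.resp_eq hmono ht⟩

/-- Proposition 10: responsibility via the minimum-cardinality diagnoses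
containing `t`. -/
theorem resp_via_mcd (D Dn Dx : Finset α) (Q : Finset α → Prop)
    (hpart : D = Dn ∪ Dx) (hdisj : Disjoint Dn Dx) (hmono : MonotoneQuery Q)
    (t : α) (ht : t ∈ Dn) :
    (resp D Dn Q t = 0 ↔ ¬ ∃ Δ : Finset α, IsMCDWith D Dn Q t Δ) ∧
    (∀ Δ : Finset α, IsMCDWith D Dn Q t Δ → resp D Dn Q t = 1 / (Δ.card : ℚ)) :=
  resp_via_mcd_general D Dn Q hmono t ht
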